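/- Let f be a homogeneous polynomial of degree d ≥ 3 in the n+1 variables x_0,…,x_n over ℂ and let P be a smooth point of the hypersurface X = V(f). Then P is a parabolic point of X — i.e., the restriction of the Hessian bilinear form B_P to the tangent space T_P has rank strictly less than n − 1 (equivalently, the second fundamental form quadric II_P is degenerate) — if and only if h(f)(P) = 0, i.e. P lies on the Hessian hypersurface of X. Hence the locus of parabolic points of X, together with the singular locus, is exactly the intersection of X with its Hessian hypersurface. -/

import Mathlib

open MvPolynomial

/-- The Hessian matrix `H(f)` of a polynomial in the `n+1` variables `x_0, …, x_n`:
the `(n+1)×(n+1)` matrix of second partial derivatives `∂²f/∂x_i∂x_j`. -/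
noncomputable def hessianMatrix (n : ℕ) (f : MvPolynomial (Fin (n + 1)) ℂ) :
    Matrix (Fin (n + 1)) (Fin (n + 1)) (MvPolynomial (Fin (n + 1)) ℂ) :=
  fun i j => pderiv i (pderiv j f)

/-- The Hessian polynomial `h(f) = det H(f)`. -/
noncomputable def hessianPoly (n : ℕ) (f : MvPolynomial (Fin (n + 1)) ℂ) :
    MvPolynomial (Fin (n + 1)) ℂ :=
  (hessianMatrix n f).det

/-- The tangent space `T_P = {v ∈ ℂ^{n+1} : ∑ i, v i * ∂f/∂x_i(P) = 0}`. -/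
noncomputable def tangentSpace (n : ℕ) (f : MvPolynomial (Fin (n + 1)) ℂ)
    (P : Fin (n + 1) → ℂ) : Submodule ℂ (Fin (n + 1) → ℂ) where
  carrier := {v | ∑ i, v i * eval P (pderiv i f) = 0}
  add_mem' := by
    intro a b ha hb
    simp only [Set.mem_setOf_eq, Pi.add_apply, add_mul, Finset.sum_add_distrib] at *
    simp [ha, hb]
  zero_mem' := by simp
  smul_mem' := by
    intro c a ha
    simp only [Set.mem_setOf_eq, Pi.smul_apply, smul_eq_mul, mul_assoc, ← Finset.mul_sum] at *
    simp [ha]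

/-- The Hessian bilinear form at `P`:
`B_P(v, w) = ∑ i j, v i * w j * (∂²f/∂x_i∂x_j)(P)`. -/
noncomputable def hessianForm (n : ℕ) (f : MvPolynomial (Fin (n + 1)) ℂ)
    (P : Fin (n + 1) → ℂ) : LinearMap.BilinForm ℂ (Fin (n + 1) → ℂ) :=
  Matrix.toBilin' ((hessianMatrix n f).map (eval P))

/-- The rank of a bilinear form on a module: the dimension of the image of the
associated linear map `M →ₗ (M →ₗ ℂ)`. -/
noncomputable def bilinRank {M : Type*} [AddCommGroup M] [Module ℂ M]
    (B : LinearMap.BilinForm ℂ M) : ℕ :=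
  Module.finrank ℂ (LinearMap.range B)

/-! By Euler's identity applied to the partial derivatives of `f`, the covector `B_P(P, ·)` is
`(d - 1)` times the differential of `f` at `P`; so at a smooth point it is nonzero, its kernel is
`T_P`, and `P ∈ T_P` because `f(P) = 0`.

For a symmetric form `B` and a vector `p` with `B p ≠ 0` and `B p p = 0`, the radical of `B`
restricted to the hyperplane `H = ker (B p)` is `H ∩ H^⊥`, which contains `p`. If `B` is
nondegenerate then `H^⊥` is a line, so this radical is exactly `span p`; otherwise a nonzero
vector of the radical of `B` lies in `H ∩ H^⊥` and is independent of `p`. Thus `B_P` restricted to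
`T_P` has nullity at most one, i.e. rank at least `n - 1`, exactly when `det H(f)(P) ≠ 0`. -/

open Module

namespace MvPolynomial

variable {R σ : Type*}

theorem pderiv_pderiv_comm [CommRing R] (i j : σ) (φ : MvPolynomial σ R) :
    pderiv i (pderiv j φ) = pderiv j (pderiv i φ) := by
  have h : ⁅pderiv i, pderiv j⁆ = (0 : Derivation R (MvPolynomial σ R) (MvPolynomial σ R)) :=
    derivation_ext fun k => by
      classical
      rw [Derivation.commutator_apply]
      simp [pderiv_X, Pi.single_apply, apply_ite]
  have := congr($h φ)
  rwa [Derivation.commutator_apply, Derivation.zero_apply, sub_eq_zero] at this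

theorem IsHomogeneous.sum_mul_eval_pderiv [CommSemiring R] [Fintype σ] {φ : MvPolynomial σ R}
    {n : ℕ} (h : φ.IsHomogeneous n) (P : σ → R) :
    ∑ i, P i * eval P (pderiv i φ) = n * eval P φ := by
  simpa [nsmul_eq_mul] using congr(eval P $(h.sum_X_mul_pderiv))

end MvPolynomial

namespace LinearMap.BilinForm

variable {K V : Type*} [Field K] [AddCommGroup V] [Module K V] {B : LinearMap.BilinForm K V}

theorem map_subtype_ker_restrict (hB : B.IsRefl) (W : Submodule K V) :
    (LinearMap.ker (B.restrict W)).map W.subtype = W ⊓ B.orthogonal W := by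
  refine le_antisymm ?_ (inf_orthogonal_self_le_ker_restrict hB)
  rintro _ ⟨v, hv, rfl⟩
  refine ⟨v.2, fun w hw => hB _ _ ?_⟩
  simpa using LinearMap.congr_fun hv ⟨w, hw⟩

variable [FiniteDimensional K V]

theorem finrank_ker_restrict_le (hB : B.IsRefl) (hnd : B.Nondegenerate) (W : Submodule K V) :
    finrank K (LinearMap.ker (B.restrict W)) ≤ finrank K V - finrank K W := by
  rw [← finrank_orthogonal hnd, ← Submodule.finrank_map_subtype_eq, map_subtype_ker_restrict hB]
  exact Submodule.finrank_mono inf_le_right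

theorem two_le_finrank_ker_restrict_ker_of_not_nondegenerate (hB : B.IsRefl) {p : V}
    (hp : B p ≠ 0) (hpp : B p p = 0) (hdeg : ¬B.Nondegenerate) :
    2 ≤ finrank K (LinearMap.ker (B.restrict (LinearMap.ker (B p)))) := by
  obtain ⟨v, hv, hv0⟩ : ∃ v, (∀ w, B v w = 0) ∧ v ≠ 0 := by
    by_contra! h
    exact hdeg (.ofSeparatingLeft h)
  have hBv : B v = 0 := LinearMap.ext hv
  have hind : LinearIndependent K ![p, v] := by
    refine LinearIndependent.pair_iff.mpr fun s t hst => ?_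
    have hs : s • B p = 0 := by simpa [hBv] using congr(B $hst)
    obtain rfl : s = 0 := (smul_eq_zero.mp hs).resolve_right hp
    exact ⟨rfl, (smul_eq_zero.mp (by simpa using hst)).resolve_right hv0⟩
  have hspan : Submodule.span K (Set.range ![p, v]) ≤
      LinearMap.ker (B p) ⊓ B.orthogonal (LinearMap.ker (B p)) := by
    rw [Submodule.span_le, Set.range_subset_iff, Fin.forall_fin_two]
    exact ⟨⟨hpp, fun w hw => hB _ _ hw⟩, ⟨hB _ _ (hv p), fun w _ => hB _ _ (hv w)⟩⟩
  calc 2 = finrank K (Submodule.span K (Set.range ![p, v])) := by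
        rw [finrank_span_eq_card hind, Fintype.card_fin]
    _ ≤ _ := Submodule.finrank_mono hspan
    _ = _ := by rw [← map_subtype_ker_restrict hB, Submodule.finrank_map_subtype_eq]

theorem finrank_ker_restrict_ker_le_one_iff (hB : B.IsRefl) {p : V} (hp : B p ≠ 0)
    (hpp : B p p = 0) :
    finrank K (LinearMap.ker (B.restrict (LinearMap.ker (B p)))) ≤ 1 ↔ B.Nondegenerate := by
  refine ⟨fun h => by_contra fun hdeg => ?_, fun hnd => ?_⟩
  · have := two_le_finrank_ker_restrict_ker_of_not_nondegenerate hB hp hpp hdeg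
    omega
  · have := finrank_ker_restrict_le hB hnd (LinearMap.ker (B p))
    have := Dual.finrank_ker_add_one_of_ne_zero hp
    omega

end LinearMap.BilinForm

section Hessian

variable {n d : ℕ} {f : MvPolynomial (Fin (n + 1)) ℂ} (P : Fin (n + 1) → ℂ)

theorem hessianForm_isSymm : (hessianForm n f P).IsSymm := by
  rw [hessianForm, Matrix.isSymm_toBilin'_iff_isSymm]
  ext i j
  simp [hessianMatrix, pderiv_pderiv_comm]

theorem hessianForm_nondegenerate_iff :
    (hessianForm n f P).Nondegenerate ↔ eval P (hessianPoly n f) ≠ 0 := by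
  rw [hessianPoly, RingHom.map_det]
  exact LinearMap.BilinForm.nondegenerate_toBilin'_iff_det_ne_zero

theorem MvPolynomial.IsHomogeneous.hessianForm_apply_self_left (hf : f.IsHomogeneous d)
    (w : Fin (n + 1) → ℂ) :
    hessianForm n f P P w = ((d - 1 : ℕ) : ℂ) * ∑ j, w j * eval P (pderiv j f) := by
  rw [hessianForm, Matrix.toBilin'_apply', Matrix.dotProduct_mulVec, dotProduct, Finset.mul_sum]
  refine Finset.sum_congr rfl fun j _ => ?_
  simp only [Matrix.vecMul, dotProduct, Matrix.map_apply, hessianMatrix]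
  rw [(hf.pderiv (i := j)).sum_mul_eval_pderiv P]
  ring

theorem MvPolynomial.IsHomogeneous.ker_hessianForm_apply_self (hf : f.IsHomogeneous d)
    (hd : 2 ≤ d) :
    LinearMap.ker (hessianForm n f P P) = tangentSpace n f P := by
  have hd1 : ((d - 1 : ℕ) : ℂ) ≠ 0 := Nat.cast_ne_zero.mpr (by omega)
  ext w
  rw [LinearMap.mem_ker, hf.hessianForm_apply_self_left, mul_eq_zero, or_iff_right hd1]
  rfl

theorem MvPolynomial.IsHomogeneous.hessianForm_apply_self_ne_zero (hf : f.IsHomogeneous d)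
    (hd : 2 ≤ d) (hsm : ∃ i, eval P (pderiv i f) ≠ 0) :
    hessianForm n f P P ≠ 0 := by
  obtain ⟨i, hi⟩ := hsm
  have hd1 : ((d - 1 : ℕ) : ℂ) ≠ 0 := Nat.cast_ne_zero.mpr (by omega)
  intro h
  have := congr($h (Pi.single i 1))
  simp [hf.hessianForm_apply_self_left, Pi.single_apply, hi, hd1] at this

end Hessian

theorem parabolic_iff_hessianPoly_eq_zero_general (n d : ℕ) (hd : 3 ≤ d)
    (f : MvPolynomial (Fin (n + 1)) ℂ) (hhom : f.IsHomogeneous d)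
    (P : Fin (n + 1) → ℂ) (hfP : eval P f = 0)
    (hsm : ∃ i, eval P (pderiv i f) ≠ 0) :
    bilinRank ((hessianForm n f P).restrict (tangentSpace n f P)) < n - 1 ↔
      eval P (hessianPoly n f) = 0 := by
  have hBP : hessianForm n f P P ≠ 0 := hhom.hessianForm_apply_self_ne_zero P (by omega) hsm
  have hBPP : hessianForm n f P P P = 0 := by
    rw [hhom.hessianForm_apply_self_left, hhom.sum_mul_eval_pderiv, hfP, mul_zero, mul_zero]
  rw [← hhom.ker_hessianForm_apply_self P (by omega), ← not_iff_not, ← ne_eq,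
    ← hessianForm_nondegenerate_iff, ← LinearMap.BilinForm.finrank_ker_restrict_ker_le_one_iff
      (hessianForm_isSymm P).isRefl hBP hBPP, bilinRank]
  have hdim := Dual.finrank_ker_add_one_of_ne_zero hBP
  have hrank := LinearMap.finrank_range_add_finrank_ker
    ((hessianForm n f P).restrict (LinearMap.ker (hessianForm n f P P)))
  rw [finrank_fin_fun] at hdim
  omega

/-- Let `f` be homogeneous of degree `d ≥ 3` and `P` a smooth point of
`X = V(f)`.  Then `P` is a parabolic point — the restriction of the Hessian bilinear form
`B_P` to the tangent space `T_P` has rank `< n - 1` (the second fundamental form quadric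
is degenerate) — if and only if `h(f)(P) = 0`, i.e. `P` lies on the Hessian hypersurface.
Hence the parabolic locus together with the singular locus is `X ∩ V(h(f))`. -/
theorem parabolic_iff_hessianPoly_eq_zero (n d : ℕ) (hd : 3 ≤ d)
    (f : MvPolynomial (Fin (n + 1)) ℂ) (hhom : f.IsHomogeneous d)
    (P : Fin (n + 1) → ℂ) (hP : P ≠ 0) (hfP : eval P f = 0)
    (hsm : ∃ i, eval P (pderiv i f) ≠ 0) :
    bilinRank ((hessianForm n f P).restrict (tangentSpace n f P)) < n - 1 ↔
      eval P (hessianPoly n f) = 0 :=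
  parabolic_iff_hessianPoly_eq_zero_general n d hd f hhom P hfP hsm
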